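/- Let M, K, C be random variables taking values in finite sets such that C is a deterministic function of (M,K), i.e., H(C|M,K) = 0. Then I(M;C|K) = H(C|K). If moreover I(M;K) = 0 and I(M;C) = 0, then H(C|K) ≤ H(K). -/

import Mathlib

open scoped BigOperators

/-- The probability that the random variable `X` takes the value `a`, on a finite
probability space with mass function `μ`. -/
noncomputable def pr {Ω A : Type*} [Fintype Ω] (μ : Ω → ℝ) (X : Ω → A) (a : A) : ℝ :=
  ∑ ω, Set.indicator {ω' | X ω' = a} μ ω

/-- Shannon entropy of a finitely valued random variable `X`. -/
noncomputable def entH {Ω A : Type*} [Fintype Ω] [Fintype A] (μ : Ω → ℝ) (X : Ω → A) : ℝ :=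
  -∑ a, pr μ X a * Real.log (pr μ X a)

/-- Conditional Shannon entropy `H(X|Y)`. -/
noncomputable def condH {Ω A B : Type*} [Fintype Ω] [Fintype A] [Fintype B]
    (μ : Ω → ℝ) (X : Ω → A) (Y : Ω → B) : ℝ :=
  entH μ (fun ω => (X ω, Y ω)) - entH μ Y

/-- Mutual information `I(X;Y)`. -/
noncomputable def mi {Ω A B : Type*} [Fintype Ω] [Fintype A] [Fintype B]
    (μ : Ω → ℝ) (X : Ω → A) (Y : Ω → B) : ℝ :=
  entH μ X + entH μ Y - entH μ (fun ω => (X ω, Y ω))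

/-- Conditional mutual information `I(X;Y|Z)`. -/
noncomputable def cmi {Ω A B D : Type*} [Fintype Ω] [Fintype A] [Fintype B] [Fintype D]
    (μ : Ω → ℝ) (X : Ω → A) (Y : Ω → B) (Z : Ω → D) : ℝ :=
  condH μ X Z + condH μ Y Z - condH μ (fun ω => (X ω, Y ω)) Z

/-- Probability of the event `E` on a finite probability space with mass function `μ`. -/
noncomputable def prEvent {Ω : Type*} [Fintype Ω] (μ : Ω → ℝ) (E : Ω → Prop) : ℝ :=
  ∑ ω, Set.indicator {ω' | E ω'} μ ω

/-!
Since `C` is determined by `(M, K)`, adjoining `C` to `(M, K)` does not change the joint entropy,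
so `H(M, C | K) = H(M | K)` and the conditional mutual information collapses to `H(C | K)`.
Under the two independence assumptions, `H(M) + H(C) = H(M, C) ≤ H(M, K, C) = H(M, K) = H(M) + H(K)`
gives `H(C) ≤ H(K)`, and conditioning does not increase entropy.
-/

open Real

lemma mul_log_sub_mul_log_le {p q : ℝ} (hp : 0 ≤ p) (hq : 0 ≤ q) (hpq : 0 < p → 0 < q) :
    p * log q - p * log p ≤ q - p := by
  rcases hp.eq_or_lt with rfl | hp
  · simpa using hq
  have hq := hpq hp
  have hlog := log_le_sub_one_of_pos (div_pos hq hp)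
  rw [log_div hq.ne' hp.ne'] at hlog
  calc p * log q - p * log p = p * (log q - log p) := by ring
    _ ≤ p * (q / p - 1) := mul_le_mul_of_nonneg_left hlog hp.le
    _ = q - p := by field_simp

lemma sum_mul_log_le_sum_mul_log {ι : Type*} [Fintype ι] {p q : ι → ℝ}
    (hp : ∀ i, 0 ≤ p i) (hq : ∀ i, 0 ≤ q i) (hpq : ∀ i, 0 < p i → 0 < q i)
    (hsum : ∑ i, q i ≤ ∑ i, p i) :
    ∑ i, p i * log (q i) ≤ ∑ i, p i * log (p i) := by
  have h := Finset.sum_le_sum fun i (_ : i ∈ Finset.univ) =>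
    mul_log_sub_mul_log_le (hp i) (hq i) (hpq i)
  rw [Finset.sum_sub_distrib, Finset.sum_sub_distrib] at h
  linarith

section Entropy

variable {Ω A B : Type*} [Fintype Ω] (μ : Ω → ℝ)

lemma pr_nonneg (hμ0 : ∀ ω, 0 ≤ μ ω) (X : Ω → A) (a : A) : 0 ≤ pr μ X a :=
  Finset.sum_nonneg fun ω _ => Set.indicator_nonneg (fun ω _ => hμ0 ω) ω

lemma sum_pr_mul [Fintype A] (X : Ω → A) (g : A → ℝ) :
    ∑ a, pr μ X a * g a = ∑ ω, μ ω * g (X ω) := by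
  classical
  simp only [pr, Set.indicator_apply, Set.mem_ofPred_eq, Finset.sum_mul]
  rw [Finset.sum_comm]
  refine Finset.sum_congr rfl fun ω _ => ?_
  simp [ite_mul, Finset.sum_ite_eq]

lemma sum_pr [Fintype A] (hμ1 : ∑ ω, μ ω = 1) (X : Ω → A) : ∑ a, pr μ X a = 1 := by
  simpa [hμ1] using sum_pr_mul μ X fun _ => 1

lemma pr_le_pr_comp (hμ0 : ∀ ω, 0 ≤ μ ω) (X : Ω → A) (f : A → B) (a : A) :
    pr μ X a ≤ pr μ (fun ω => f (X ω)) (f a) :=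
  Finset.sum_le_sum fun ω _ => Set.indicator_le_indicator_of_subset
    (fun ω (h : X ω = a) => show f (X ω) = f a by rw [h]) (fun ω => hμ0 ω) ω

variable [Fintype A] [Fintype B]

lemma entH_comp_le (hμ0 : ∀ ω, 0 ≤ μ ω) (X : Ω → A) (f : A → B) :
    entH μ (fun ω => f (X ω)) ≤ entH μ X := by
  rw [entH, entH, neg_le_neg_iff, sum_pr_mul μ (fun ω => f (X ω)),
    ← sum_pr_mul μ X fun a => log (pr μ (fun ω => f (X ω)) (f a))]
  refine Finset.sum_le_sum fun a _ => ?_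
  rcases (pr_nonneg μ hμ0 X a).eq_or_lt with h0 | h0
  · simp [← h0]
  · exact mul_le_mul_of_nonneg_left (log_le_log h0 (pr_le_pr_comp μ hμ0 X f a)) h0.le

lemma entH_comp_of_injective (X : Ω → A) {f : A → B} (hf : Function.Injective f) :
    entH μ (fun ω => f (X ω)) = entH μ X := by
  classical
  have hpr_image : ∀ a, pr μ (fun ω => f (X ω)) (f a) = pr μ X a := by
    intro a
    simp [pr, hf.eq_iff]
  have hpr_off_image : ∀ b ∉ Finset.univ.image f, pr μ (fun ω => f (X ω)) b = 0 := by
    intro b hb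
    refine Finset.sum_eq_zero fun ω _ => Set.indicator_of_notMem ?_ _
    exact fun h => hb (Finset.mem_image.2 ⟨X ω, Finset.mem_univ _, h⟩)
  rw [entH, entH, ← Finset.sum_subset (Finset.subset_univ _) fun b _ hb => by
      rw [hpr_off_image b hb, zero_mul],
    Finset.sum_image fun x _ y _ h => hf h]
  simp only [hpr_image]

lemma entH_pair_le_add (hμ0 : ∀ ω, 0 ≤ μ ω) (hμ1 : ∑ ω, μ ω = 1) (X : Ω → A) (Y : Ω → B) :
    entH μ (fun ω => (X ω, Y ω)) ≤ entH μ X + entH μ Y := by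
  set P := pr μ fun ω => (X ω, Y ω)
  have hP : ∀ z, 0 ≤ P z := pr_nonneg μ hμ0 _
  have hP_fst : ∀ z, P z ≤ pr μ X z.1 := pr_le_pr_comp μ hμ0 _ Prod.fst
  have hP_snd : ∀ z, P z ≤ pr μ Y z.2 := pr_le_pr_comp μ hμ0 _ Prod.snd
  have hsplit : ∀ z, P z * log (pr μ X z.1 * pr μ Y z.2)
      = P z * log (pr μ X z.1) + P z * log (pr μ Y z.2) := by
    intro z
    rcases (hP z).eq_or_lt with h0 | h0
    · simp [← h0]
    · rw [log_mul (h0.trans_le (hP_fst z)).ne' (h0.trans_le (hP_snd z)).ne', mul_add]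
  have hcross : ∑ z, P z * log (pr μ X z.1 * pr μ Y z.2) = -(entH μ X + entH μ Y) := by
    simp only [hsplit, Finset.sum_add_distrib, entH, P, sum_pr_mul]
    ring
  have hmass : ∑ z : A × B, pr μ X z.1 * pr μ Y z.2 ≤ ∑ z, P z := by
    rw [Fintype.sum_prod_type, ← Fintype.sum_mul_sum, sum_pr μ hμ1, sum_pr μ hμ1,
      sum_pr μ hμ1, mul_one]
  have hgibbs := sum_mul_log_le_sum_mul_log hP
    (fun z => mul_nonneg (pr_nonneg μ hμ0 X z.1) (pr_nonneg μ hμ0 Y z.2))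
    (fun z h => mul_pos (h.trans_le (hP_fst z)) (h.trans_le (hP_snd z))) hmass
  rw [entH]
  linarith

end Entropy

/-- If `C` is a deterministic function of `(M,K)`, then `I(M;C|K) = H(C|K)`; if moreover
`M ⟂ K` and `M ⟂ C`, then `H(C|K) ≤ H(K)`. -/
theorem deterministic_encoder_cond_info
    {Ω : Type} [Fintype Ω] (μ : Ω → ℝ) (hμ0 : ∀ ω, 0 ≤ μ ω) (hμ1 : ∑ ω, μ ω = 1)
    (𝓜 𝒦 𝒞 : Type) [Fintype 𝓜] [Fintype 𝒦] [Fintype 𝒞]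
    (M : Ω → 𝓜) (K : Ω → 𝒦) (C : Ω → 𝒞)
    (hdet : condH μ C (fun ω => (M ω, K ω)) = 0) :
    cmi μ M C K = condH μ C K ∧
      (mi μ M K = 0 → mi μ M C = 0 → condH μ C K ≤ entH μ K) := by
  have hCMK : entH μ (fun ω => (C ω, (M ω, K ω))) = entH μ (fun ω => (M ω, K ω)) :=
    sub_eq_zero.mp hdet
  have hMCK : entH μ (fun ω => ((M ω, C ω), K ω)) = entH μ (fun ω => (M ω, K ω)) := by
    rw [← hCMK, ← entH_comp_of_injective μ (fun ω => (C ω, (M ω, K ω))) (f := fun z : 𝒞 × 𝓜 × 𝒦 => ((z.2.1, z.1), z.2.2))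
      fun _ _ h => by simp_all [Prod.ext_iff]]
  have hMKC : entH μ (fun ω => ((M ω, K ω), C ω)) = entH μ (fun ω => (M ω, K ω)) := by
    rw [← hCMK, ← entH_comp_of_injective μ (fun ω => (C ω, (M ω, K ω))) Prod.swap_injective]
    rfl
  refine ⟨by unfold cmi condH; linarith, fun hMK hMC => ?_⟩
  have hMC_le : entH μ (fun ω => (M ω, C ω)) ≤ entH μ (fun ω => ((M ω, K ω), C ω)) :=
    entH_comp_le μ hμ0 (fun ω => ((M ω, K ω), C ω)) fun z => (z.1.1, z.2)
  have hCK := entH_pair_le_add μ hμ0 hμ1 C K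
  unfold mi at hMK hMC
  unfold condH
  linarith
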